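/- Let c ∈ ℝ, η ∈ ℝ with η ≠ 0, and let u, v : U → ℝ be smooth functions on an open set U ⊆ ℝ² satisfying u_{xt} = (u² + v² + c)v_x + u, v_{xt} = −(u² + v² + c)u_x + v on U. Define F₁₁ = −η√2·v_x, F₁₂ = (√2/η)u, F₂₁ = η², F₂₂ = −1/η² + u² + v² + c, F₃₁ = −η√2·u_x, F₃₂ = −(√2/η)v. Then on U the structure equations with δ = −1 hold: −∂_t F₁₁ + ∂_x F₁₂ = F₃₁F₂₂ − F₃₂F₂₁, −∂_t F₂₁ + ∂_x F₂₂ = F₁₁F₃₂ − F₁₂F₃₁, −∂_t F₃₁ + ∂_x F₃₂ = −(F₁₁F₂₂ − F₁₂F₂₁); hence this system describes spherical surfaces with these associated functions. -/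

import Mathlib

/-! Substituting `u_xt` and `v_xt` from the system, each structure equation becomes a polynomial
identity in `u, v, u_x, v_x, η, 1/η` and `√2`; only the equation for `F₂₁, F₂₂` needs `√2² = 2`,
where the `u u_x + v v_x` terms of `∂ₓF₂₂` cancel against `F₁₁F₃₂ − F₁₂F₃₁`. -/

open Real

/-- Partial derivative in the `x` direction of a function on the `(x, t)` plane. -/
noncomputable def pdx (f : ℝ × ℝ → ℝ) (p : ℝ × ℝ) : ℝ := fderiv ℝ f p (1, 0)

/-- Partial derivative in the `t` direction of a function on the `(x, t)` plane. -/
noncomputable def pdt (f : ℝ × ℝ → ℝ) (p : ℝ × ℝ) : ℝ := fderiv ℝ f p (0, 1)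

/-- The structure equations of a surface of constant Gaussian curvature `-δ`. -/
def StructEqs (δ : ℝ) (U : Set (ℝ × ℝ)) (F11 F12 F21 F22 F31 F32 : ℝ × ℝ → ℝ) : Prop :=
  ∀ p ∈ U,
    -(pdt F11 p) + pdx F12 p = F31 p * F22 p - F32 p * F21 p ∧
    -(pdt F21 p) + pdx F22 p = F11 p * F32 p - F12 p * F31 p ∧
    -(pdt F31 p) + pdx F32 p = δ * (F11 p * F22 p - F12 p * F21 p)

section PartialDerivatives

variable {f g : ℝ × ℝ → ℝ} {p : ℝ × ℝ}

lemma pdx_contDiffOn {U : Set (ℝ × ℝ)} {m n : WithTop ℕ∞} (hU : IsOpen U)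
    (hf : ContDiffOn ℝ n f U) (hmn : m + 1 ≤ n) : ContDiffOn ℝ m (pdx f) U :=
  (hf.fderiv_of_isOpen hU hmn).clm_apply contDiffOn_const

lemma differentiableAt_pdx {U : Set (ℝ × ℝ)} {n : WithTop ℕ∞} (hU : IsOpen U)
    (hf : ContDiffOn ℝ n f U) (hn : 2 ≤ n) (hp : p ∈ U) : DifferentiableAt ℝ (pdx f) p :=
  ((pdx_contDiffOn (m := 1) hU hf hn).differentiableOn one_ne_zero).differentiableAt
    (hU.mem_nhds hp)

lemma pdx_const_mul (hf : DifferentiableAt ℝ f p) (a : ℝ) :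
    pdx (fun q => a * f q) p = a * pdx f p := by
  simp [pdx, fderiv_const_mul hf a]

lemma pdt_const_mul (hf : DifferentiableAt ℝ f p) (a : ℝ) :
    pdt (fun q => a * f q) p = a * pdt f p := by
  simp [pdt, fderiv_const_mul hf a]

lemma pdt_const (a : ℝ) : pdt (fun _ => a) p = 0 := by
  simp [pdt]

lemma pdx_add (hf : DifferentiableAt ℝ f p) (hg : DifferentiableAt ℝ g p) :
    pdx (fun q => f q + g q) p = pdx f p + pdx g p := by
  simp [pdx, fderiv_fun_add hf hg]

lemma pdx_const_add (a : ℝ) : pdx (fun q => a + f q) p = pdx f p := by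
  simp [pdx]

lemma pdx_add_const (a : ℝ) : pdx (fun q => f q + a) p = pdx f p := by
  simp [pdx]

lemma pdx_sq (hf : DifferentiableAt ℝ f p) :
    pdx (fun q => f q ^ 2) p = 2 * f p * pdx f p := by
  simp [pdx, fderiv_fun_pow 2 hf]

end PartialDerivatives

/-- The system `u_xt = (u² + v² + c)v_x + u`, `v_xt = −(u² + v² + c)u_x + v`
describes spherical surfaces (`δ = −1`). -/
theorem system_7mplrex2_describes_ss (c η : ℝ) (hη : η ≠ 0) (U : Set (ℝ × ℝ)) (hU : IsOpen U)
    (u v : ℝ × ℝ → ℝ)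
    (hu : ContDiffOn ℝ (⊤ : ℕ∞) u U) (hv : ContDiffOn ℝ (⊤ : ℕ∞) v U)
    (heq1 : ∀ p ∈ U, pdt (pdx u) p = (u p ^ 2 + v p ^ 2 + c) * pdx v p + u p)
    (heq2 : ∀ p ∈ U, pdt (pdx v) p = -(u p ^ 2 + v p ^ 2 + c) * pdx u p + v p) :
    StructEqs (-1) U
      (fun q => -(η * Real.sqrt 2) * pdx v q)
      (fun q => Real.sqrt 2 / η * u q)
      (fun _ => η ^ 2)
      (fun q => -(1 / η ^ 2) + u q ^ 2 + v q ^ 2 + c)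
      (fun q => -(η * Real.sqrt 2) * pdx u q)
      (fun q => -(Real.sqrt 2 / η) * v q) := by
  intro p hp
  have hud : DifferentiableAt ℝ u p := (hu.contDiffAt (hU.mem_nhds hp)).differentiableAt (by simp)
  have hvd : DifferentiableAt ℝ v p := (hv.contDiffAt (hU.mem_nhds hp)).differentiableAt (by simp)
  have huxd := differentiableAt_pdx hU hu (WithTop.coe_le_coe.mpr le_top) hp
  have hvxd := differentiableAt_pdx hU hv (WithTop.coe_le_coe.mpr le_top) hp
  have hsqrt2 : √2 ^ 2 = 2 := Real.sq_sqrt zero_le_two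
  refine ⟨?_, ?_, ?_⟩
  · rw [pdt_const_mul hvxd, pdx_const_mul hud, heq2 p hp]
    field_simp
    ring
  · rw [pdt_const, pdx_add_const, pdx_add (by fun_prop) (by fun_prop), pdx_const_add,
      pdx_sq hud, pdx_sq hvd]
    field_simp
    linear_combination (-(pdx v p * v p + u p * pdx u p)) * hsqrt2
  · rw [pdt_const_mul huxd, pdx_const_mul hvd, heq1 p hp]
    field_simp
    ring
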